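/- arXiv:0806.1745 — 2 statements merged into one kernel-verified Lean document; each statement's English description precedes it below -/
import Mathlib

section
/- There exist universal constants A, C > 0 such that the following holds. Let X be a finite, connected, undirected d-regular graph with doubling constant c_X ≥ 2 and Poincaré constant P_X, let D = diam(X) and δ > 0, and let x₁, …, x_M ∈ V be points that are pairwise at distance greater than δD and such that the balls B(x₁, δD), …, B(x_M, δD) cover V. If φ : V → ℝ is a nonzero eigenfunction of the discrete Laplacian Δ with eigenvalue λ ≠ 0 satisfying Σ_{y ∈ B(x_j, δD)} φ(y) = 0 for every j ∈ {1, …, M}, then 1/λ ≤ C · c_X^A · P_X · (δD)². -/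
open Finset

/-- The closed ball of radius `R` (a real number) about `x` in the shortest-path metric
of the graph `G`. -/
noncomputable def gball {V : Type} [Fintype V] (G : SimpleGraph V) (x : V) (R : ℝ) : Finset V :=
  @Finset.filter _ (fun y => (G.dist x y : ℝ) ≤ R) (Classical.decPred _) Finset.univ

/-- The set of neighbors of `x` in `G`. -/
noncomputable def nbrs {V : Type} [Fintype V] (G : SimpleGraph V) (x : V) : Finset V :=
  @Finset.filter _ (fun y => G.Adj x y) (Classical.decPred _) Finset.univ

/-- `|∇f(x)|² = (1/(2d)) ∑_{y ~ x} |f(x) - f(y)|²`. -/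
noncomputable def gradSq {V : Type} [Fintype V] (G : SimpleGraph V) (d : ℕ)
    (f : V → ℝ) (x : V) : ℝ :=
  (1 / (2 * (d : ℝ))) * ∑ y ∈ nbrs G x, (f x - f y) ^ 2

/-- The diameter of the graph `G` in the shortest-path metric. -/
noncomputable def gdiam {V : Type} [Fintype V] (G : SimpleGraph V) : ℕ :=
  Finset.univ.sup fun p : V × V => G.dist p.1 p.2

/-!
Cover `V` by the balls `B(x_j, r)`, `r = δD`. Since `φ` has zero sum on each ball, the Poincaré
inequality bounds `∑_{B(x_j, r)} φ²` by `P r² ∑_{B(x_j, 3r)} |∇φ|²`. The balls `B(x_j, 3r)` overlap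
at most `c⁴` times: for the `j` with `y ∈ B(x_j, 3r)`, the balls `B(x_j, r/2)` are disjoint, lie in
`B(y, 4r)`, and by doubling each has at least `c⁻⁴ |B(y, 4r)|` points. Summing over `j` and using
`∑ |∇φ|² = ⟨φ, Δφ⟩ = λ ∑ φ²` gives `∑ φ² ≤ c⁴ P r² λ ∑ φ²`.
-/

namespace SimpleGraph

variable {V : Type} [Fintype V] (G : SimpleGraph V)

lemma mem_gball {x y : V} {R : ℝ} : y ∈ gball G x R ↔ (G.dist x y : ℝ) ≤ R := by
  simp [gball]

lemma mem_nbrs {x y : V} : y ∈ nbrs G x ↔ G.Adj x y := by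
  simp [nbrs]

lemma mem_gball_self (x : V) {R : ℝ} (hR : 0 ≤ R) : x ∈ gball G x R := by
  simpa [mem_gball] using hR

variable {G}

lemma gball_subset_gball (hG : G.Connected) {x x' : V} {R R' : ℝ}
    (h : (G.dist x x' : ℝ) + R ≤ R') : gball G x' R ⊆ gball G x R' := by
  intro z hz
  rw [mem_gball] at hz ⊢
  have := hG.dist_triangle (u := x) (v := x') (w := z)
  have : (G.dist x z : ℝ) ≤ G.dist x x' + G.dist x' z := by exact_mod_cast this
  linarith

lemma disjoint_gball (hG : G.Connected) {x x' : V} {R R' : ℝ}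
    (h : R + R' < G.dist x x') : Disjoint (gball G x R) (gball G x' R') := by
  refine Finset.disjoint_left.2 fun z hz hz' => ?_
  rw [mem_gball] at hz hz'
  have := hG.dist_triangle (u := x) (v := z) (w := x')
  have : (G.dist x x' : ℝ) ≤ G.dist x z + G.dist x' z := by
    rw [G.dist_comm (u := x')]; exact_mod_cast this
  linarith

lemma one_le_gdiam {v w : V} (h : G.Adj v w) : 1 ≤ gdiam G := by
  rw [← dist_eq_one_iff_adj.2 h]
  exact Finset.le_sup (f := fun p : V × V => G.dist p.1 p.2) (Finset.mem_univ (v, w))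

lemma card_gball_le_pow_mul {c : ℝ} (hc : 0 ≤ c)
    (hdbl : ∀ (x : V) (R : ℝ), 0 < R → ((gball G x (2 * R)).card : ℝ) ≤ c * (gball G x R).card)
    (x : V) {R : ℝ} (hR : 0 < R) (n : ℕ) :
    ((gball G x (2 ^ n * R)).card : ℝ) ≤ c ^ n * (gball G x R).card := by
  induction n with
  | zero => simp
  | succ n ih =>
    calc ((gball G x (2 ^ (n + 1) * R)).card : ℝ)
        = (gball G x (2 * (2 ^ n * R))).card := by rw [pow_succ', mul_assoc]
      _ ≤ c * (gball G x (2 ^ n * R)).card := hdbl x _ (by positivity)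
      _ ≤ c * (c ^ n * (gball G x R).card) := by gcongr
      _ = c ^ (n + 1) * (gball G x R).card := by ring

open scoped Classical in
lemma card_filter_mem_gball_le_pow {ι : Type*} [Fintype ι] (hG : G.Connected) {c r : ℝ}
    (hc : 0 ≤ c)
    (hdbl : ∀ (x : V) (R : ℝ), 0 < R → ((gball G x (2 * R)).card : ℝ) ≤ c * (gball G x R).card)
    (hr : 0 < r) (x : ι → V) (hsep : ∀ i j, i ≠ j → r < G.dist (x i) (x j)) (y : V) :
    ((Finset.univ.filter fun j => y ∈ gball G (x j) (3 * r)).card : ℝ) ≤ c ^ 4 := by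
  set S := Finset.univ.filter fun j => y ∈ gball G (x j) (3 * r)
  set N : ℝ := ((gball G y (4 * r)).card : ℝ)
  have hnear : ∀ j ∈ S, (G.dist y (x j) : ℝ) ≤ 3 * r := fun j hj => by
    rw [G.dist_comm, ← mem_gball]; exact (Finset.mem_filter.1 hj).2
  have hdisj : (S : Set ι).PairwiseDisjoint fun j => gball G (x j) (r / 2) :=
    fun i _ j _ hij => disjoint_gball hG (by linarith [hsep i j hij])
  have hpack : ∑ j ∈ S, ((gball G (x j) (r / 2)).card : ℝ) ≤ N := by
    rw [← Nat.cast_sum, ← Finset.card_biUnion hdisj]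
    refine Nat.cast_le.2 (Finset.card_le_card (Finset.biUnion_subset.2 fun j hj => ?_))
    exact gball_subset_gball hG (by linarith [hnear j hj])
  have hdouble : ∀ j ∈ S, N ≤ c ^ 4 * (gball G (x j) (r / 2)).card := fun j hj =>
    calc N ≤ (gball G (x j) (2 ^ 4 * (r / 2))).card := by
          refine Nat.cast_le.2 (Finset.card_le_card (gball_subset_gball hG ?_))
          rw [G.dist_comm]; linarith [hnear j hj]
      _ ≤ c ^ 4 * (gball G (x j) (r / 2)).card :=
          card_gball_le_pow_mul hc hdbl (x j) (by positivity) 4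
  have hN : 0 < N := Nat.cast_pos.2 (Finset.card_pos.2 ⟨y, mem_gball_self G y (by positivity)⟩)
  refine le_of_mul_le_mul_right ?_ hN
  calc (S.card : ℝ) * N = ∑ _j ∈ S, N := by rw [Finset.sum_const, nsmul_eq_mul]
    _ ≤ ∑ j ∈ S, c ^ 4 * (gball G (x j) (r / 2)).card := Finset.sum_le_sum hdouble
    _ = c ^ 4 * ∑ j ∈ S, ((gball G (x j) (r / 2)).card : ℝ) := by rw [Finset.mul_sum]
    _ ≤ c ^ 4 * N := by gcongr

open scoped Classical in
lemma sum_sum_gball_eq_sum_card_mul {ι : Type*} [Fintype ι] (x : ι → V) (R : ℝ) (f : V → ℝ) :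
    ∑ j, ∑ y ∈ gball G (x j) R, f y
      = ∑ y, ((Finset.univ.filter fun j => y ∈ gball G (x j) R).card : ℝ) * f y := by
  rw [Finset.sum_comm' (t' := Finset.univ) (s' := fun y => Finset.univ.filter
    fun j => y ∈ gball G (x j) R) (by simp)]
  simp only [Finset.sum_const, nsmul_eq_mul]

lemma sum_le_sum_sum_gball_of_cover {ι : Type*} [Fintype ι] {x : ι → V} {R : ℝ}
    (hcov : ∀ v, ∃ j, v ∈ gball G (x j) R) {f : V → ℝ} (hf : 0 ≤ f) :
    ∑ v, f v ≤ ∑ j, ∑ y ∈ gball G (x j) R, f y := by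
  classical
  rw [sum_sum_gball_eq_sum_card_mul]
  refine Finset.sum_le_sum fun y _ => le_mul_of_one_le_left (hf y) ?_
  obtain ⟨j, hj⟩ := hcov y
  exact Nat.one_le_cast.2 (Finset.card_pos.2 ⟨j, Finset.mem_filter.2 ⟨Finset.mem_univ j, hj⟩⟩)

lemma sum_sum_gball_le_pow_mul_sum {ι : Type*} [Fintype ι] (hG : G.Connected) {c r : ℝ}
    (hc : 0 ≤ c)
    (hdbl : ∀ (x : V) (R : ℝ), 0 < R → ((gball G x (2 * R)).card : ℝ) ≤ c * (gball G x R).card)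
    (hr : 0 < r) {x : ι → V} (hsep : ∀ i j, i ≠ j → r < G.dist (x i) (x j))
    {f : V → ℝ} (hf : 0 ≤ f) :
    ∑ j, ∑ y ∈ gball G (x j) (3 * r), f y ≤ c ^ 4 * ∑ v, f v := by
  classical
  rw [sum_sum_gball_eq_sum_card_mul, Finset.mul_sum]
  exact Finset.sum_le_sum fun y _ =>
    mul_le_mul_of_nonneg_right (card_filter_mem_gball_le_pow hG hc hdbl hr x hsep y) (hf y)

lemma sum_sum_nbrs_comm (F : V → V → ℝ) :
    ∑ v, ∑ y ∈ nbrs G v, F v y = ∑ y, ∑ v ∈ nbrs G y, F v y :=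
  Finset.sum_comm' (by simp [mem_nbrs, G.adj_comm])

lemma gradSq_nonneg (d : ℕ) (f : V → ℝ) (x : V) : 0 ≤ gradSq G d f x :=
  mul_nonneg (by positivity) (Finset.sum_nonneg fun _ _ => sq_nonneg _)

lemma sum_gradSq_eq_sum_mul_laplacian {d : ℕ} (hd : 0 < d) (hreg : ∀ x, (nbrs G x).card = d)
    (f : V → ℝ) :
    ∑ v, gradSq G d f v = ∑ v, f v * (f v - (1 / (d : ℝ)) * ∑ y ∈ nbrs G v, f y) := by
  have hd' : (d : ℝ) ≠ 0 := by positivity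
  have hswap : ∑ v, ∑ y ∈ nbrs G v, f y * (f v - f y)
      = -∑ v, ∑ y ∈ nbrs G v, f v * (f v - f y) := by
    rw [sum_sum_nbrs_comm fun v y => f y * (f v - f y)]
    simp only [← Finset.sum_neg_distrib]
    exact Finset.sum_congr rfl fun _ _ => Finset.sum_congr rfl fun _ _ => by ring
  have hvertex : ∀ v, ∑ y ∈ nbrs G v, f v * (f v - f y)
      = d * (f v * (f v - (1 / (d : ℝ)) * ∑ y ∈ nbrs G v, f y)) := fun v => by
    rw [← Finset.mul_sum, Finset.sum_sub_distrib, Finset.sum_const, hreg, nsmul_eq_mul]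
    field_simp
  calc ∑ v, gradSq G d f v
      = 1 / (2 * d) * ∑ v, ∑ y ∈ nbrs G v, (f v * (f v - f y) - f y * (f v - f y)) := by
        simp only [gradSq, ← Finset.mul_sum]
        congr 1
        exact Finset.sum_congr rfl fun _ _ => Finset.sum_congr rfl fun _ _ => by ring
    _ = 1 / (2 * d) * (2 * ∑ v, ∑ y ∈ nbrs G v, f v * (f v - f y)) := by
        simp only [Finset.sum_sub_distrib, hswap]
        ring
    _ = ∑ v, f v * (f v - (1 / (d : ℝ)) * ∑ y ∈ nbrs G v, f y) := by
        simp only [hvertex, ← Finset.mul_sum]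
        field_simp

lemma sum_sq_le_mul_sum_sum_gradSq {ι : Type*} [Fintype ι] {d : ℕ} {P r : ℝ}
    (hpoin : ∀ (x : V) (R : ℝ) (f : V → ℝ), 0 ≤ R →
      ∑ y ∈ gball G x R, (f y - (∑ z ∈ gball G x R, f z) / ((gball G x R).card : ℝ)) ^ 2
        ≤ P * R ^ 2 * ∑ y ∈ gball G x (3 * R), gradSq G d f y)
    (hr : 0 ≤ r) {x : ι → V} (hcov : ∀ v, ∃ j, v ∈ gball G (x j) r)
    {φ : V → ℝ} (hzero : ∀ j, ∑ y ∈ gball G (x j) r, φ y = 0) :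
    ∑ v, φ v ^ 2 ≤ P * r ^ 2 * ∑ j, ∑ y ∈ gball G (x j) (3 * r), gradSq G d φ y := by
  calc ∑ v, φ v ^ 2 ≤ ∑ j, ∑ y ∈ gball G (x j) r, φ y ^ 2 :=
        sum_le_sum_sum_gball_of_cover hcov fun v => sq_nonneg (φ v)
    _ ≤ ∑ j, P * r ^ 2 * ∑ y ∈ gball G (x j) (3 * r), gradSq G d φ y :=
        Finset.sum_le_sum fun j _ => by simpa [hzero j] using hpoin (x j) r φ hr
    _ = P * r ^ 2 * ∑ j, ∑ y ∈ gball G (x j) (3 * r), gradSq G d φ y := by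
        rw [Finset.mul_sum]

end SimpleGraph

open SimpleGraph

/-- if `x₁, …, x_M` are pairwise at distance `> δD` and the balls
`B(x_j, δD)` cover `V`, and `φ` is a nonzero eigenfunction with eigenvalue `λ ≠ 0` whose
averages over all the balls `B(x_j, δD)` vanish, then `1/λ ≤ C · c^A · P · (δD)²`. -/
theorem eigenvalue_lower_bound_vanishing_averages :
    ∃ A C : ℝ, 0 < A ∧ 0 < C ∧
      ∀ (V : Type) [Fintype V] (G : SimpleGraph V) (d : ℕ) (c P : ℝ),
        1 ≤ d →
        (∀ x : V, (nbrs G x).card = d) →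
        G.Connected →
        2 ≤ c →
        -- `c` is the doubling constant of `G`
        (∀ (x : V) (R : ℝ), 0 < R →
            ((gball G x (2 * R)).card : ℝ) ≤ c * ((gball G x R).card : ℝ)) →
        -- `P` is the Poincaré constant of `G`
        (∀ (x : V) (R : ℝ) (f : V → ℝ), 0 ≤ R →
            ∑ y ∈ gball G x R,
                (f y - (∑ z ∈ gball G x R, f z) / ((gball G x R).card : ℝ)) ^ 2
              ≤ P * R ^ 2 * ∑ y ∈ gball G x (3 * R), gradSq G d f y) →
        ∀ δ : ℝ, 0 < δ →
        ∀ (M : ℕ) (x : Fin M → V),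
          -- the points are pairwise at distance greater than `δ·D`
          (∀ i j : Fin M, i ≠ j →
              δ * (gdiam G : ℝ) < (G.dist (x i) (x j) : ℝ)) →
          -- the balls `B(x_j, δD)` cover `V`
          (∀ v : V, ∃ j : Fin M, v ∈ gball G (x j) (δ * (gdiam G : ℝ))) →
        ∀ (φ : V → ℝ) (lam : ℝ),
          φ ≠ 0 → lam ≠ 0 →
          -- `φ` is an eigenfunction of the discrete Laplacian with eigenvalue `lam`
          (∀ v : V, φ v - (1 / (d : ℝ)) * ∑ y ∈ nbrs G v, φ y = lam * φ v) →
          -- the sums of `φ` over the balls vanish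
          (∀ j : Fin M, ∑ y ∈ gball G (x j) (δ * (gdiam G : ℝ)), φ y = 0) →
          1 / lam ≤ C * c ^ A * P * (δ * (gdiam G : ℝ)) ^ 2 := by
  refine ⟨4, 1, by norm_num, by norm_num, ?_⟩
  intro V _ G d c P hd hreg hG hc hdbl hpoin δ hδ M x hsep hcov φ lam hφ _ heig hzero
  set r := δ * (gdiam G : ℝ)
  obtain ⟨v, hv⟩ := Function.ne_iff.1 hφ
  obtain ⟨w, hw⟩ : (nbrs G v).Nonempty := Finset.card_pos.1 (by rw [hreg]; exact hd)
  have hr : 0 < r := mul_pos hδ (Nat.cast_pos.2 (one_le_gdiam ((mem_nbrs G).1 hw)))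
  have hmass : 0 < ∑ v, φ v ^ 2 :=
    Finset.sum_pos' (fun _ _ => sq_nonneg _) ⟨v, Finset.mem_univ v, sq_pos_of_ne_zero hv⟩
  have henergy : ∑ v, gradSq G d φ v = lam * ∑ v, φ v ^ 2 := by
    rw [sum_gradSq_eq_sum_mul_laplacian hd hreg, Finset.mul_sum]
    exact Finset.sum_congr rfl fun v _ => by rw [heig v]; ring
  set X := ∑ j, ∑ y ∈ gball G (x j) (3 * r), gradSq G d φ y
  have hlocal : ∑ v, φ v ^ 2 ≤ P * r ^ 2 * X := sum_sq_le_mul_sum_sum_gradSq hpoin hr.le hcov hzero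
  have hoverlap : X ≤ c ^ 4 * (lam * ∑ v, φ v ^ 2) := henergy ▸
    sum_sum_gball_le_pow_mul_sum hG (by linarith) hdbl hr hsep (gradSq_nonneg d φ)
  have hX : 0 ≤ X := Finset.sum_nonneg fun _ _ => Finset.sum_nonneg fun _ _ => gradSq_nonneg d φ _
  have hPr : 0 < P * r ^ 2 := pos_of_mul_pos_left (hmass.trans_le hlocal) hX
  have hkey : 1 ≤ c ^ 4 * P * r ^ 2 * lam := by
    refine le_of_mul_le_mul_right ?_ hmass
    calc 1 * ∑ v, φ v ^ 2 ≤ P * r ^ 2 * X := (one_mul _).trans_le hlocal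
      _ ≤ P * r ^ 2 * (c ^ 4 * (lam * ∑ v, φ v ^ 2)) := mul_le_mul_of_nonneg_left hoverlap hPr.le
      _ = c ^ 4 * P * r ^ 2 * lam * ∑ v, φ v ^ 2 := by ring
  have hK : 0 < c ^ 4 * P * r ^ 2 := by
    rw [mul_assoc]; exact mul_pos (pow_pos (by linarith) 4) hPr
  have hlam : 0 < lam := pos_of_mul_pos_right (one_pos.trans_le hkey) hK.le
  rw [div_le_iff₀ hlam, Real.rpow_ofNat, one_mul]
  exact hkey
end

section
/- There exist universal constants A, C > 0 such that the following holds. Let X be a finite, connected, undirected d-regular graph with doubling constant c_X ≥ 2. Then for every integer k with 3 ≤ k ≤ |V|, the k-th eigenvalue of the discrete Laplacian on X satisfies λ_k ≤ C · k^{A·c_X} / diam(X)². -/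
open Finset

/-!
Take a diametral geodesic and `k` points on it spaced `s = ⌊diam X / k⌋` apart. The tent
functions `max (R - dist(xᵢ, ·)) 0` with `R = (s - 1) / 2` vanish on each other's supports
and on their neighbours, so they are orthogonal both for the inner product and for the
Dirichlet form. Each has energy at most `|B(xᵢ, R)|` and mass at least `(R/2)² |B(xᵢ, R/2)|`,
so doubling bounds its Rayleigh quotient by `4c/R²`, and Courant–Fischer gives
`λ_k ≤ 4c/R² ≲ c k² / diam²`. When `diam < 2k` the bound `λ_k ≤ 2`, valid for every eigenvalue,
is enough. Finally `c k² ≤ k^(2c)`.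
-/

open Matrix Module

section Dimension
variable {K M : Type*} [DivisionRing K] [AddCommGroup M] [Module K M] [FiniteDimensional K M]

theorem Submodule.exists_ne_zero_mem_inf_of_finrank_lt_add {W P : Submodule K M}
    (h : finrank K M < finrank K W + finrank K P) : ∃ g ∈ W ⊓ P, g ≠ 0 := by
  refine Submodule.exists_mem_ne_zero_of_ne_bot fun hbot => ?_
  have hsum := Submodule.finrank_sup_add_finrank_inf_eq W P
  rw [hbot, finrank_bot] at hsum
  have := Submodule.finrank_le (W ⊔ P)
  omega

theorem iSupIndep.finrank_biSup_eq_sum {ι : Type*} {p : ι → Submodule K M} (hp : iSupIndep p)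
    (s : Finset ι) : finrank K ↥(⨆ i ∈ s, p i) = ∑ i ∈ s, finrank K (p i) := by
  classical
  induction s using Finset.induction_on with
  | empty => simp
  | insert a s ha ih =>
    have hdisj : Disjoint (p a) (⨆ i ∈ s, p i) := hp.disjoint_biSup ha
    have hsum := Submodule.finrank_sup_add_finrank_inf_eq (p a) (⨆ i ∈ s, p i)
    rw [hdisj.eq_bot, finrank_bot, add_zero] at hsum
    rw [Finset.iSup_insert, Finset.sum_insert ha, hsum, ih]

end Dimension

section MinMax
variable {V : Type*} {T : Module.End ℝ (V → ℝ)}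

theorem hasEigenvalue_of_card_eq_finrank {n : ℕ} {lam : Fin n → ℝ}
    (hmult : ∀ μ : ℝ, Nat.card {i // lam i = μ} = finrank ℝ (T.eigenspace μ)) (i : Fin n) :
    T.HasEigenvalue (lam i) := by
  rw [Module.End.hasEigenvalue_iff]
  intro hbot
  have hpos : 0 < Nat.card {j // lam j = lam i} := Nat.card_pos_iff.mpr ⟨⟨⟨i, rfl⟩⟩, inferInstance⟩
  rw [hmult, hbot, finrank_bot] at hpos
  exact lt_irrefl 0 hpos

variable [Fintype V]

theorem dotProduct_self_nonneg {R : Type*} [Ring R] [LinearOrder R] [IsStrictOrderedRing R]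
    (v : V → R) : 0 ≤ v ⬝ᵥ v :=
  Finset.sum_nonneg fun i _ => mul_self_nonneg (v i)

theorem dotProduct_self_pos {R : Type*} [Ring R] [LinearOrder R] [IsStrictOrderedRing R]
    {v : V → R} (hv : v ≠ 0) : 0 < v ⬝ᵥ v :=
  (dotProduct_self_nonneg v).lt_of_ne (Ne.symm (dotProduct_self_eq_zero.not.mpr hv))

theorem linearIndependent_of_pairwise_dotProduct_eq_zero {ι : Type*} {f : ι → V → ℝ}
    (hf0 : ∀ i, f i ≠ 0) (horth : Pairwise fun i j => f i ⬝ᵥ f j = 0) : LinearIndependent ℝ f :=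
  RCLike.linearIndependent_of_ne_zero_of_wInner_one_eq_zero hf0 fun i j h => by
    simpa [RCLike.wInner_one_eq_sum, dotProduct, mul_comm] using horth h

theorem sum_dotProduct_sum_of_pairwise {ι R : Type*} [NonUnitalNonAssocSemiring R]
    (s : Finset ι) (u w : ι → V → R) (h : ∀ i ∈ s, ∀ j ∈ s, i ≠ j → u i ⬝ᵥ w j = 0) :
    (∑ i ∈ s, u i) ⬝ᵥ (∑ j ∈ s, w j) = ∑ i ∈ s, u i ⬝ᵥ w i := by
  simp_rw [sum_dotProduct, dotProduct_sum]
  exact Finset.sum_congr rfl fun i hi =>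
    Finset.sum_eq_single i (fun j hj hji => h i hi j hj hji.symm) (absurd hi)

theorem dotProduct_apply_le_of_mem_span {ι : Type*} [Fintype ι] {f : ι → V → ℝ} {β : ℝ}
    (horth : Pairwise fun i j => f i ⬝ᵥ f j = 0)
    (horthT : Pairwise fun i j => f i ⬝ᵥ T (f j) = 0)
    (hq : ∀ i, f i ⬝ᵥ T (f i) ≤ β * (f i ⬝ᵥ f i)) {g : V → ℝ}
    (hg : g ∈ Submodule.span ℝ (Set.range f)) : g ⬝ᵥ T g ≤ β * (g ⬝ᵥ g) := by
  obtain ⟨a, rfl⟩ := (Submodule.mem_span_range_iff_exists_fun ℝ).mp hg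
  simp_rw [map_sum, map_smul]
  rw [sum_dotProduct_sum_of_pairwise univ _ _ fun i _ j _ h => by simp [horthT h],
    sum_dotProduct_sum_of_pairwise univ _ _ fun i _ j _ h => by simp [horth h], Finset.mul_sum]
  refine Finset.sum_le_sum fun i _ => ?_
  simp only [smul_dotProduct, dotProduct_smul, smul_eq_mul]
  have := mul_le_mul_of_nonneg_left (hq i) (mul_self_nonneg (a i))
  linarith

theorem card_filter_lt_eq_finrank_iSup_eigenspace {n : ℕ} {lam : Fin n → ℝ}
    (hmult : ∀ μ : ℝ, Nat.card {i // lam i = μ} = finrank ℝ (T.eigenspace μ)) (β : ℝ) :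
    #(univ.filter fun i => β < lam i)
      = finrank ℝ ↥(⨆ μ ∈ (univ.filter fun i => β < lam i).image lam, T.eigenspace μ) := by
  classical
  rw [T.eigenspaces_iSupIndep.finrank_biSup_eq_sum, card_eq_sum_card_image lam]
  refine Finset.sum_congr rfl fun μ hμ => ?_
  obtain ⟨i, hi, rfl⟩ := Finset.mem_image.mp hμ
  rw [← hmult, Nat.card_eq_fintype_card, Fintype.card_subtype, Finset.filter_filter]
  congr 1
  ext j
  simp only [Finset.mem_filter, Finset.mem_univ, true_and] at hi ⊢
  exact ⟨And.right, fun h => ⟨h ▸ hi, h⟩⟩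

variable (hT : ∀ f g, f ⬝ᵥ T g = T f ⬝ᵥ g)
include hT

theorem dotProduct_eq_zero_of_mem_eigenspace {μ ν : ℝ} (hμν : μ ≠ ν) {f g : V → ℝ}
    (hf : f ∈ T.eigenspace μ) (hg : g ∈ T.eigenspace ν) : f ⬝ᵥ g = 0 := by
  have h := hT f g
  rw [Module.End.mem_eigenspace_iff.mp hf, Module.End.mem_eigenspace_iff.mp hg, dotProduct_smul,
    smul_dotProduct, smul_eq_mul, smul_eq_mul] at h
  have : (μ - ν) * (f ⬝ᵥ g) = 0 := by linarith
  exact (mul_eq_zero.mp this).resolve_left (sub_ne_zero.mpr hμν)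

theorem mul_dotProduct_lt_of_mem_iSup_eigenspace {β : ℝ} {S : Finset ℝ} (hS : ∀ μ ∈ S, β < μ)
    {g : V → ℝ} (hg : g ∈ ⨆ μ ∈ S, T.eigenspace μ) (hg0 : g ≠ 0) :
    β * (g ⬝ᵥ g) < g ⬝ᵥ T g := by
  obtain ⟨F, rfl⟩ := (Submodule.mem_iSup_finset_iff_exists_sum _ g).mp hg
  have hTF (μ : ℝ) : T (F μ) = μ • (F μ : V → ℝ) := Module.End.mem_eigenspace_iff.mp (F μ).2
  have horth : ∀ μ ∈ S, ∀ ν ∈ S, μ ≠ ν → (F μ : V → ℝ) ⬝ᵥ F ν = 0 := fun μ _ ν _ h =>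
    dotProduct_eq_zero_of_mem_eigenspace hT h (F μ).2 (F ν).2
  have hnorm := sum_dotProduct_sum_of_pairwise S (fun μ => (F μ : V → ℝ)) _ horth
  have henergy : (∑ μ ∈ S, (F μ : V → ℝ)) ⬝ᵥ T (∑ μ ∈ S, F μ)
      = ∑ μ ∈ S, μ * ((F μ : V → ℝ) ⬝ᵥ F μ) := by
    simp_rw [map_sum, hTF]
    rw [sum_dotProduct_sum_of_pairwise S _ _ fun μ hμ ν hν h => by
      rw [dotProduct_smul, horth μ hμ ν hν h, smul_zero]]
    simp_rw [dotProduct_smul, smul_eq_mul]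
  obtain ⟨μ₀, hμ₀, hF0⟩ : ∃ μ ∈ S, (F μ : V → ℝ) ≠ 0 := by
    by_contra! h
    exact hg0 (Finset.sum_eq_zero h)
  rw [hnorm, henergy, Finset.mul_sum]
  exact Finset.sum_lt_sum
    (fun μ hμ => mul_le_mul_of_nonneg_right (hS μ hμ).le (dotProduct_self_nonneg _))
    ⟨μ₀, hμ₀, mul_lt_mul_of_pos_right (hS μ₀ hμ₀) (dotProduct_self_pos hF0)⟩

theorem eigenvalue_le_of_orthogonal_test_functions {lam : Fin (Fintype.card V) → ℝ}
    (hmono : Monotone lam)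
    (hmult : ∀ μ : ℝ, Nat.card {i // lam i = μ} = finrank ℝ (T.eigenspace μ))
    {k : ℕ} (hk : 0 < k) (hkn : k ≤ Fintype.card V) (f : Fin k → V → ℝ) {β : ℝ}
    (hf0 : ∀ i, f i ≠ 0) (horth : Pairwise fun i j => f i ⬝ᵥ f j = 0)
    (horthT : Pairwise fun i j => f i ⬝ᵥ T (f j) = 0)
    (hq : ∀ i, f i ⬝ᵥ T (f i) ≤ β * (f i ⬝ᵥ f i)) :
    lam ⟨k - 1, by omega⟩ ≤ β := by
  -- Otherwise the eigenspaces above `β` have total dimension `> n - k`, so they meet the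
  -- `k`-dimensional span of the test functions, where the Rayleigh quotient is `≤ β`.
  by_contra! hlt
  have hcount : Fintype.card V - (k - 1) ≤ #(univ.filter fun i => β < lam i) := by
    rw [← Fin.card_Ici ⟨k - 1, by omega⟩]
    refine Finset.card_le_card fun i hi => ?_
    simp only [Finset.mem_Ici, Finset.mem_filter, Finset.mem_univ, true_and] at hi ⊢
    exact hlt.trans_le (hmono hi)
  rw [card_filter_lt_eq_finrank_iSup_eigenspace hmult] at hcount
  have hW : finrank ℝ (Submodule.span ℝ (Set.range f)) = k := by
    rw [finrank_span_eq_card (linearIndependent_of_pairwise_dotProduct_eq_zero hf0 horth),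
      Fintype.card_fin]
  obtain ⟨g, ⟨hgW, hgP⟩, hg0⟩ := Submodule.exists_ne_zero_mem_inf_of_finrank_lt_add
    (W := Submodule.span ℝ (Set.range f))
    (P := ⨆ μ ∈ (univ.filter fun i => β < lam i).image lam, T.eigenspace μ)
    (by rw [finrank_fintype_fun_eq_card]; omega)
  have hS : ∀ μ ∈ (univ.filter fun i => β < lam i).image lam, β < μ := by
    simp only [Finset.mem_image, Finset.mem_filter, Finset.mem_univ, true_and]
    rintro μ ⟨i, hi, rfl⟩
    exact hi
  exact (mul_dotProduct_lt_of_mem_iSup_eigenspace hT hS hgP hg0).not_ge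
    (dotProduct_apply_le_of_mem_span horth horthT hq hgW)

end MinMax

section Graph
variable {V : Type} [Fintype V] {G : SimpleGraph V}

theorem mem_nbrs {x y : V} : y ∈ nbrs G x ↔ G.Adj x y := by simp [nbrs]

theorem mem_gball {x y : V} {R : ℝ} : y ∈ gball G x R ↔ (G.dist x y : ℝ) ≤ R := by simp [gball]

theorem nbrs_eq_neighborFinset [DecidableRel G.Adj] (x : V) : nbrs G x = G.neighborFinset x := by
  ext y
  rw [mem_nbrs, SimpleGraph.mem_neighborFinset]

section Laplacian
variable {d : ℕ} {lap : Module.End ℝ (V → ℝ)}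

theorem sum_sum_ite_adj_add [DecidableRel G.Adj] (hreg : ∀ x : V, (nbrs G x).card = d)
    (h : V → ℝ) :
    ∑ i, ∑ j, (if G.Adj i j then h i + h j else 0) = 2 * d * ∑ i, h i := by
  have hdeg (i : V) : ∑ j, (if G.Adj i j then h i else 0) = d * h i := by
    rw [← Finset.sum_filter, Finset.sum_const, nsmul_eq_mul, ← hreg i]
    congr 3
    ext j
    simp [mem_nbrs]
  have hdeg' (j : V) : ∑ i, (if G.Adj i j then h j else 0) = d * h j := by
    simp_rw [G.adj_comm _ j]
    exact hdeg j
  simp_rw [ite_add_zero, Finset.sum_add_distrib]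
  rw [Finset.sum_comm (f := fun i j => if G.Adj i j then h j else 0)]
  simp_rw [hdeg, hdeg', ← Finset.mul_sum]
  ring

variable (hlap : ∀ (f : V → ℝ) (x : V), lap f x = f x - (1 / (d : ℝ)) * ∑ y ∈ nbrs G x, f y)
include hlap

theorem lap_apply_eq_zero {f : V → ℝ} {x : V} (hx : f x = 0) (hnbrs : ∀ y ∈ nbrs G x, f y = 0) :
    lap f x = 0 := by
  rw [hlap, hx, Finset.sum_eq_zero hnbrs, mul_zero, sub_zero]

variable (hd : d ≠ 0) (hreg : ∀ x : V, (nbrs G x).card = d)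
include hd hreg

theorem lap_eq_smul_lapMatrix_mulVec [DecidableEq V] [DecidableRel G.Adj] (f : V → ℝ) :
    lap f = (d : ℝ)⁻¹ • (G.lapMatrix ℝ *ᵥ f) := by
  ext x
  rw [hlap, Pi.smul_apply, SimpleGraph.lapMatrix_mulVec_apply, ← nbrs_eq_neighborFinset,
    ← SimpleGraph.card_neighborFinset_eq_degree, ← nbrs_eq_neighborFinset, hreg, smul_eq_mul]
  field_simp

theorem dotProduct_lap_comm (f g : V → ℝ) : f ⬝ᵥ lap g = lap f ⬝ᵥ g := by
  classical
  rw [lap_eq_smul_lapMatrix_mulVec hlap hd hreg, lap_eq_smul_lapMatrix_mulVec hlap hd hreg,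
    dotProduct_smul, smul_dotProduct, dotProduct_mulVec, ← mulVec_transpose,
    (G.isSymm_lapMatrix ℝ).eq]

theorem dotProduct_lap_self [DecidableRel G.Adj] (f : V → ℝ) :
    f ⬝ᵥ lap f = (∑ i, ∑ j, if G.Adj i j then (f i - f j) ^ 2 else 0) / (2 * d) := by
  classical
  rw [lap_eq_smul_lapMatrix_mulVec hlap hd hreg, dotProduct_smul, ← toLinearMap₂'_apply',
    SimpleGraph.lapMatrix_toLinearMap₂', smul_eq_mul]
  field_simp

theorem dotProduct_lap_self_le {f h : V → ℝ}
    (hfh : ∀ i j, G.Adj i j → (f i - f j) ^ 2 ≤ h i + h j) : f ⬝ᵥ lap f ≤ ∑ i, h i := by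
  classical
  have hd' : (0 : ℝ) < d := by positivity
  rw [dotProduct_lap_self hlap hd hreg, div_le_iff₀ (by positivity), mul_comm,
    ← sum_sum_ite_adj_add hreg]
  exact Finset.sum_le_sum fun i _ => Finset.sum_le_sum fun j _ => by
    split_ifs with hij
    · exact hfh i j hij
    · rfl

theorem eigenvalue_le_two {μ : ℝ} (hμ : lap.HasEigenvalue μ) : μ ≤ 2 := by
  obtain ⟨f, hf, hf0⟩ := hμ.exists_hasEigenvector
  have hrayleigh : f ⬝ᵥ lap f = μ * (f ⬝ᵥ f) := by
    rw [Module.End.mem_eigenspace_iff.mp hf, dotProduct_smul, smul_eq_mul]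
  have hle : f ⬝ᵥ lap f ≤ ∑ i, 2 * f i ^ 2 :=
    dotProduct_lap_self_le hlap hd hreg fun i j _ => by nlinarith [sq_nonneg (f i + f j)]
  rw [← Finset.mul_sum] at hle
  have hnorm : ∑ i, f i ^ 2 = f ⬝ᵥ f := by simp [dotProduct, sq]
  exact le_of_mul_le_mul_right (hrayleigh ▸ hnorm ▸ hle) (dotProduct_self_pos hf0)

end Laplacian
end Graph

section Tent
variable {V : Type} {G : SimpleGraph V}

noncomputable def tent (G : SimpleGraph V) (x : V) (R : ℝ) (z : V) : ℝ :=
  max (R - G.dist x z) 0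

theorem tent_eq_zero {x z : V} {R : ℝ} (h : R ≤ G.dist x z) : tent G x R z = 0 :=
  max_eq_right (by linarith)

theorem dist_lt_of_tent_ne_zero {x z : V} {R : ℝ} (h : tent G x R z ≠ 0) : (G.dist x z : ℝ) < R :=
  lt_of_not_ge fun hR => h (tent_eq_zero hR)

theorem tent_self (x : V) {R : ℝ} (hR : 0 ≤ R) : tent G x R x = R := by
  simp [tent, hR]

theorem half_le_tent {x z : V} {R : ℝ} (h : (G.dist x z : ℝ) ≤ R / 2) : R / 2 ≤ tent G x R z :=
  le_max_of_le_left (by linarith)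

theorem abs_tent_sub_tent_le_one (x : V) (R : ℝ) {z w : V} (hzw : G.Adj z w) :
    |tent G x R z - tent G x R w| ≤ 1 := by
  have hw : G.dist x w ≤ G.dist x z + 1 := by
    rcases hzw.diff_dist_adj (u := x) with h | h | h <;> omega
  have hz : G.dist x z ≤ G.dist x w + 1 := by
    rcases hzw.symm.diff_dist_adj (u := x) with h | h | h <;> omega
  refine (abs_max_sub_max_le_abs _ _ 0).trans (abs_le.mpr ⟨?_, ?_⟩)
  · have : (G.dist x z : ℝ) ≤ G.dist x w + 1 := by exact_mod_cast hz
    linarith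
  · have : (G.dist x w : ℝ) ≤ G.dist x z + 1 := by exact_mod_cast hw
    linarith

theorem tent_eq_zero_of_dist_le_one (hconn : G.Connected) {x y z w : V} {R : ℝ}
    (hxy : 2 * R + 1 ≤ G.dist x y) (hz : tent G x R z ≠ 0) (hzw : G.dist z w ≤ 1) :
    tent G y R w = 0 := by
  refine tent_eq_zero ?_
  have h₁ : G.dist x y ≤ G.dist x z + G.dist z y := hconn.dist_triangle
  have h₂ : G.dist z y ≤ G.dist z w + G.dist w y := hconn.dist_triangle
  have : (G.dist x y : ℝ) ≤ G.dist x z + 1 + G.dist y w := by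
    rw [G.dist_comm (u := w)] at h₂
    exact_mod_cast (by omega : G.dist x y ≤ G.dist x z + 1 + G.dist y w)
  linarith [dist_lt_of_tent_ne_zero hz]

end Tent

section TestFunctions
variable {V : Type} [Fintype V] {G : SimpleGraph V} {d : ℕ} {lap : Module.End ℝ (V → ℝ)}
  (hlap : ∀ (f : V → ℝ) (x : V), lap f x = f x - (1 / (d : ℝ)) * ∑ y ∈ nbrs G x, f y)

theorem tent_dotProduct_tent_eq_zero (hconn : G.Connected) {x y : V} {R : ℝ}
    (hxy : 2 * R + 1 ≤ G.dist x y) : tent G x R ⬝ᵥ tent G y R = 0 :=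
  Finset.sum_eq_zero fun z _ => by
    by_cases hz : tent G x R z = 0
    · rw [hz, zero_mul]
    · rw [tent_eq_zero_of_dist_le_one hconn hxy hz (by simp), mul_zero]

include hlap in
theorem tent_dotProduct_lap_tent_eq_zero (hconn : G.Connected) {x y : V} {R : ℝ}
    (hxy : 2 * R + 1 ≤ G.dist x y) : tent G x R ⬝ᵥ lap (tent G y R) = 0 :=
  Finset.sum_eq_zero fun z _ => by
    by_cases hz : tent G x R z = 0
    · rw [hz, zero_mul]
    · rw [lap_apply_eq_zero hlap (tent_eq_zero_of_dist_le_one hconn hxy hz (by simp))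
        fun w hw => tent_eq_zero_of_dist_le_one hconn hxy hz
          (SimpleGraph.dist_eq_one_iff_adj.mpr (mem_nbrs.mp hw)).le, mul_zero]

include hlap in
theorem tent_dotProduct_lap_le_card_gball (hd : d ≠ 0) (hreg : ∀ x : V, (nbrs G x).card = d)
    (x : V) (R : ℝ) : tent G x R ⬝ᵥ lap (tent G x R) ≤ #(gball G x R) := by
  classical
  have hB (z : V) (hz : tent G x R z ≠ 0) : z ∈ gball G x R :=
    mem_gball.mpr (dist_lt_of_tent_ne_zero hz).le
  have hcard : ∑ z, (if z ∈ gball G x R then (1 : ℝ) else 0) = #(gball G x R) := by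
    rw [Finset.sum_boole, Finset.filter_mem_eq_of_subset (Finset.subset_univ _)]
  refine hcard ▸ dotProduct_lap_self_le hlap hd hreg fun i j hij => ?_
  have hsq := (sq_le_one_iff_abs_le_one _).mpr (abs_tent_sub_tent_le_one x R hij)
  by_cases h : tent G x R i = 0 ∧ tent G x R j = 0
  · rw [h.1, h.2, sub_self, zero_pow two_ne_zero]
    split_ifs <;> norm_num
  · rcases not_and_or.mp h with h | h <;> simp only [hB _ h, if_true] <;> split_ifs <;> linarith

theorem mul_card_gball_le_tent_dotProduct (x : V) {R : ℝ} (hR : 0 ≤ R) :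
    (R / 2) ^ 2 * #(gball G x (R / 2)) ≤ tent G x R ⬝ᵥ tent G x R := by
  calc (R / 2) ^ 2 * #(gball G x (R / 2))
      = ∑ z ∈ gball G x (R / 2), (R / 2) * (R / 2) := by
        rw [Finset.sum_const, nsmul_eq_mul, sq, mul_comm]
    _ ≤ ∑ z ∈ gball G x (R / 2), tent G x R z * tent G x R z :=
        Finset.sum_le_sum fun z hz =>
          mul_self_le_mul_self (by positivity) (half_le_tent (mem_gball.mp hz))
    _ ≤ tent G x R ⬝ᵥ tent G x R :=
        Finset.sum_le_univ_sum_of_nonneg fun z => mul_self_nonneg _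

include hlap in
theorem tent_dotProduct_lap_le (hd : d ≠ 0) (hreg : ∀ x : V, (nbrs G x).card = d) {c : ℝ}
    (hc : 0 ≤ c)
    (hdbl : ∀ (x : V) (R : ℝ), 0 < R →
      ((gball G x (2 * R)).card : ℝ) ≤ c * ((gball G x R).card : ℝ))
    (x : V) {R : ℝ} (hR : 0 < R) :
    tent G x R ⬝ᵥ lap (tent G x R) ≤ 4 * c / R ^ 2 * (tent G x R ⬝ᵥ tent G x R) := by
  have hdouble := hdbl x (R / 2) (by positivity)
  rw [mul_div_cancel₀ R two_ne_zero] at hdouble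
  have hmass := mul_card_gball_le_tent_dotProduct (G := G) x hR.le
  calc tent G x R ⬝ᵥ lap (tent G x R) ≤ #(gball G x R) :=
        tent_dotProduct_lap_le_card_gball hlap hd hreg x R
    _ ≤ c * #(gball G x (R / 2)) := hdouble
    _ ≤ c * ((tent G x R ⬝ᵥ tent G x R) / (R / 2) ^ 2) := by
        gcongr
        rw [le_div_iff₀ (by positivity)]
        linarith
    _ = 4 * c / R ^ 2 * (tent G x R ⬝ᵥ tent G x R) := by
        field_simp
        ring

end TestFunctions

section Geodesic
variable {V : Type} {G : SimpleGraph V}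

theorem SimpleGraph.Walk.sub_le_dist_getVert (hconn : G.Connected) {u v : V} (p : G.Walk u v)
    (hp : p.length = G.dist u v) (i : ℕ) {j : ℕ} (hj : j ≤ p.length) :
    j - i ≤ G.dist (p.getVert i) (p.getVert j) := by
  have hu : G.dist u (p.getVert i) ≤ i :=
    (SimpleGraph.dist_le (p.take i)).trans (by simp [SimpleGraph.Walk.take_length])
  have hv : G.dist (p.getVert j) v ≤ p.length - j :=
    (SimpleGraph.dist_le (p.drop j)).trans_eq (p.drop_length j)
  have h₁ : G.dist u v ≤ G.dist u (p.getVert i) + G.dist (p.getVert i) v := hconn.dist_triangle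
  have h₂ : G.dist (p.getVert i) v ≤ G.dist (p.getVert i) (p.getVert j) + G.dist (p.getVert j) v :=
    hconn.dist_triangle
  omega

variable [Fintype V]

theorem dist_le_gdiam (u v : V) : G.dist u v ≤ gdiam G :=
  Finset.le_sup (f := fun p : V × V => G.dist p.1 p.2) (Finset.mem_univ (u, v))

theorem exists_dist_eq_gdiam [Nonempty V] : ∃ u v : V, G.dist u v = gdiam G := by
  obtain ⟨p, -, hp⟩ :=
    Finset.exists_mem_eq_sup univ univ_nonempty fun p : V × V => G.dist p.1 p.2
  exact ⟨p.1, p.2, hp.symm⟩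

theorem gdiam_pos (hconn : G.Connected) (hV : 1 < Fintype.card V) : 0 < gdiam G := by
  obtain ⟨u, v, huv⟩ := Fintype.exists_pair_of_one_lt_card hV
  exact (hconn.pos_dist_of_ne huv).trans_le (dist_le_gdiam u v)

theorem exists_separated_points (hconn : G.Connected) [Nonempty V] {k s : ℕ}
    (hks : k * s ≤ gdiam G) : ∃ x : Fin k → V, Pairwise fun i j => s ≤ G.dist (x i) (x j) := by
  obtain ⟨u, v, huv⟩ := exists_dist_eq_gdiam (G := G)
  obtain ⟨p, hp⟩ := hconn.exists_walk_length_eq_dist u v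
  have hsep {i j : Fin k} (hij : i < j) :
      s ≤ G.dist (p.getVert (i * s)) (p.getVert (j * s)) := by
    have hj : (j : ℕ) * s ≤ p.length := by
      rw [hp, huv]
      exact (Nat.mul_le_mul_right s j.isLt.le).trans hks
    refine le_trans ?_ (p.sub_le_dist_getVert hconn hp (i * s) hj)
    rw [← Nat.sub_mul]
    exact Nat.le_mul_of_pos_left s (Nat.sub_pos_of_lt hij)
  refine ⟨fun i => p.getVert (i * s), fun i j hij => ?_⟩
  rcases lt_or_gt_of_ne hij with h | h
  · exact hsep h
  · rw [G.dist_comm]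
    exact hsep h

end Geodesic

section Eigenvalue
variable {V : Type} [Fintype V] {G : SimpleGraph V} {d : ℕ} {lap : Module.End ℝ (V → ℝ)}
  (hlap : ∀ (f : V → ℝ) (x : V), lap f x = f x - (1 / (d : ℝ)) * ∑ y ∈ nbrs G x, f y)
  (hd : d ≠ 0) (hreg : ∀ x : V, (nbrs G x).card = d) {c : ℝ} (hc : 0 ≤ c)
  (hdbl : ∀ (x : V) (R : ℝ), 0 < R →
    ((gball G x (2 * R)).card : ℝ) ≤ c * ((gball G x R).card : ℝ))
  {lam : Fin (Fintype.card V) → ℝ} (hmono : Monotone lam)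
  (hmult : ∀ μ : ℝ, Nat.card {i // lam i = μ} = finrank ℝ (lap.eigenspace μ))
include hlap hd hreg hc hdbl hmono hmult

theorem eigenvalue_le_of_separated_points (hconn : G.Connected) {k : ℕ} (hk : 0 < k)
    (hkn : k ≤ Fintype.card V) {s : ℕ} (hs : 2 ≤ s) (x : Fin k → V)
    (hx : Pairwise fun i j => s ≤ G.dist (x i) (x j)) :
    lam ⟨k - 1, by omega⟩ ≤ 16 * c / ((s : ℝ) - 1) ^ 2 := by
  have hs' : (2 : ℝ) ≤ s := by exact_mod_cast hs
  set R : ℝ := ((s : ℝ) - 1) / 2 with hRdef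
  have hR : 0 < R := by linarith
  have hsep : Pairwise fun i j => 2 * R + 1 ≤ (G.dist (x i) (x j) : ℝ) := fun i j hij => by
    have : (s : ℝ) ≤ G.dist (x i) (x j) := by exact_mod_cast hx hij
    linarith
  calc lam ⟨k - 1, by omega⟩ ≤ 4 * c / R ^ 2 :=
        eigenvalue_le_of_orthogonal_test_functions (dotProduct_lap_comm hlap hd hreg) hmono hmult
          hk hkn (fun i => tent G (x i) R)
          (fun i h => hR.ne' ((tent_self (x i) hR.le).symm.trans (congrFun h (x i))))
          (fun i j hij => tent_dotProduct_tent_eq_zero hconn (hsep hij))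
          (fun i j hij => tent_dotProduct_lap_tent_eq_zero hlap hconn (hsep hij))
          (fun i => tent_dotProduct_lap_le hlap hd hreg hc hdbl (x i) hR)
    _ = 16 * c / ((s : ℝ) - 1) ^ 2 := by
        rw [hRdef]
        field_simp
        ring

theorem eigenvalue_mul_gdiam_sq_le (hconn : G.Connected) {k : ℕ} (hk : 0 < k)
    (hkn : k ≤ Fintype.card V) (hlarge : 2 * k ≤ gdiam G) :
    lam ⟨k - 1, by omega⟩ * (gdiam G : ℝ) ^ 2 ≤ 144 * (c * (k : ℝ) ^ 2) := by
  have : Nonempty V := Fintype.card_pos_iff.mp (by omega)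
  set s := gdiam G / k
  have hs : 2 ≤ s := (Nat.le_div_iff_mul_le hk).mpr (by linarith)
  obtain ⟨x, hx⟩ := exists_separated_points hconn (Nat.mul_div_le (gdiam G) k)
  have hlam :=
    eigenvalue_le_of_separated_points hlap hd hreg hc hdbl hmono hmult hconn hk hkn hs x hx
  have hs' : (2 : ℝ) ≤ s := by exact_mod_cast hs
  have hD : (gdiam G : ℝ) ≤ 3 * k * ((s : ℝ) - 1) := by
    have : (gdiam G : ℝ) < k * (s + 1) := by exact_mod_cast Nat.lt_mul_div_succ (gdiam G) hk
    nlinarith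
  have hs1 : (s : ℝ) - 1 ≠ 0 := by linarith
  calc lam ⟨k - 1, by omega⟩ * (gdiam G : ℝ) ^ 2
      ≤ 16 * c / ((s : ℝ) - 1) ^ 2 * (gdiam G : ℝ) ^ 2 :=
        mul_le_mul_of_nonneg_right hlam (sq_nonneg _)
    _ ≤ 16 * c / ((s : ℝ) - 1) ^ 2 * (3 * k * ((s : ℝ) - 1)) ^ 2 := by gcongr
    _ = 144 * (c * (k : ℝ) ^ 2) := by
        field_simp
        ring

end Eigenvalue

theorem mul_sq_le_rpow_two_mul {k c : ℝ} (hk : 3 ≤ k) (hc : 2 ≤ c) : c * k ^ 2 ≤ k ^ (2 * c) := by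
  have hc3 : 1 + c * 2 ≤ (1 + 2) ^ c := one_add_mul_self_le_rpow_one_add (by norm_num) (by linarith)
  have hck : (3 : ℝ) ^ c ≤ k ^ c := Real.rpow_le_rpow (by norm_num) hk (by linarith)
  have hk2 : k ^ 2 ≤ k ^ c := by
    rw [← Real.rpow_natCast]
    exact Real.rpow_le_rpow_of_exponent_le (by linarith) (by exact_mod_cast hc)
  rw [two_mul, Real.rpow_add (by linarith)]
  norm_num at hc3
  exact mul_le_mul (by linarith) hk2 (by positivity) (by positivity)

/-- there are universal constants `A, C > 0` such that for every finite connected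
`d`-regular graph with doubling constant `c ≥ 2` and every integer `3 ≤ k ≤ |V|`, the `k`-th
eigenvalue of the discrete Laplacian satisfies `λ_k ≤ C · k^(A·c) / diam(X)²`. -/
theorem kth_eigenvalue_upper_bound_doubling :
    ∃ A C : ℝ, 0 < A ∧ 0 < C ∧
      ∀ (V : Type) [Fintype V] (G : SimpleGraph V) (d : ℕ) (c : ℝ),
        1 ≤ d →
        (∀ x : V, (nbrs G x).card = d) →
        G.Connected →
        2 ≤ c →
        -- `c` is the doubling constant of `G`
        (∀ (x : V) (R : ℝ), 0 < R →
            ((gball G x (2 * R)).card : ℝ) ≤ c * ((gball G x R).card : ℝ)) →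
        -- the discrete Laplacian
        ∀ lap : Module.End ℝ (V → ℝ),
          (∀ (f : V → ℝ) (x : V),
              lap f x = f x - (1 / (d : ℝ)) * ∑ y ∈ nbrs G x, f y) →
          -- `lam` enumerates the eigenvalues in nondecreasing order with multiplicity
          ∀ lam : Fin (Fintype.card V) → ℝ,
            Monotone lam →
            (∀ μ : ℝ, Nat.card {i : Fin (Fintype.card V) // lam i = μ}
                = Module.finrank ℝ (Module.End.eigenspace lap μ)) →
            ∀ k : ℕ, ∀ hk3 : 3 ≤ k, ∀ hkn : k ≤ Fintype.card V,
              lam ⟨k - 1, by omega⟩ ≤ C * (k : ℝ) ^ (A * c) / (gdiam G : ℝ) ^ 2 := by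
  refine ⟨2, 144, by norm_num, by norm_num, ?_⟩
  intro V _ G d c hd hreg hconn hc hdbl lap hlap lam hmono hmult k hk3 hkn
  have hd0 : d ≠ 0 := by omega
  have hD : (0 : ℝ) < gdiam G := by exact_mod_cast gdiam_pos hconn (by omega)
  have hbound : lam ⟨k - 1, by omega⟩ * (gdiam G : ℝ) ^ 2 ≤ 144 * (c * (k : ℝ) ^ 2) := by
    rcases lt_or_ge (gdiam G) (2 * k) with hsmall | hlarge
    · have hle2 := eigenvalue_le_two hlap hd0 hreg
        (hasEigenvalue_of_card_eq_finrank hmult ⟨k - 1, by omega⟩)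
      have hDk : (gdiam G : ℝ) ≤ 2 * k := by exact_mod_cast hsmall.le
      nlinarith [mul_le_mul_of_nonneg_right hle2 (sq_nonneg (gdiam G : ℝ))]
    · exact eigenvalue_mul_gdiam_sq_le hlap hd0 hreg (by linarith) hdbl hmono hmult hconn
        (by omega) hkn hlarge
  calc lam ⟨k - 1, by omega⟩ ≤ 144 * (c * (k : ℝ) ^ 2) / (gdiam G : ℝ) ^ 2 :=
        (le_div_iff₀ (by positivity)).mpr hbound
    _ ≤ 144 * (k : ℝ) ^ (2 * c) / (gdiam G : ℝ) ^ 2 := by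
        gcongr
        exact mul_sq_le_rpow_two_mul (by exact_mod_cast hk3) hc
end
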